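/- In the stated setting (Φ₁(r) = (1∧r)^{β₁}, Φ₂(r) = (1∧r)^{β₂}φ(r) with β₂ = α + β₁, and liminf_{s→0⁺} ℓ(s) > 0), define for t > 0 and x, y ∈ D with x ≠ y: 𝓘(t,x,y) := A_{Φ₀,Φ₀,1}(t,x,y) · ∫ from (δ_D(x)∨δ_D(y)∨t^{1/α})∧(|x−y|/4) to |x−y| of [ℓ((δ_D(x)∨t^{1/α})/u) · ℓ((δ_D(y)∨t^{1/α})/u) · φ(u/|x−y|)] / [ℓ((δ_D(x)∨t^{1/α})/|x−y|) · ℓ((δ_D(y)∨t^{1/α})/|x−y|)] · du/u. Then: (a) for every pair of distinct x, y ∈ D, lim_{t→0⁺} [t|x−y|^{−α} 𝓘(t,x,y)] / A_{Φ₁,Φ₂,ℓ}(t,x,y) = 0; (b) for every pair of distinct points Q, Q′ ∈ ∂D, limsup_{t→0⁺} L(t) = +∞, where L(t) denotes the limit inferior of [t|x−y|^{−α} 𝓘(t,x,y)] / A_{Φ₁,Φ₂,ℓ}(t,x,y) as x → Q and y → Q′ with x, y ∈ D. -/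

import Mathlib

/-!
(a) For fixed `x, y ∈ D`, as soon as `t^{1/α} ≤ δ_D(x) ∧ δ_D(y)` neither `𝓘(t,x,y)` nor
`A_{Φ₁,Φ₂,ℓ}(t,x,y)` depends on `t`, so the quotient is a constant multiple of `t`.

(b) If `δ_D(x), δ_D(y) ≤ τ := t^{1/α} ≤ |x-y|/4`, the substitution `u = |x-y| v` turns the
quotient into `R(b) = (∫_b^1 ℓ(b/v)² φ(v) dv/v) / φ(b)` with `b = τ/|x-y|`. As `ℓ ≥ c₀ > 0` on
`(0,1]`, `R(b) ≥ c₀² F(b)/φ(b)` where `F(b) = ∫_b^1 φ(v) dv/v`, and `F/φ` is unbounded near `0`: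
if `F ≤ Kφ` on `(0,a₁]`, each halving of `b` multiplies `F` by `1 + 1/(4CK)`, so `F` grows like a
positive power of `1/b`, whereas `φ(b) = O(b^{-ε})` for every `ε > 0`. For `a` with `F(a) > Kφ(a)`
take `τ = a|Q-Q'|/2`: then `b ∈ [a/4, a]` for `x` near `Q` and `y` near `Q'`, where `R` is bounded
above (so the liminf is not a junk value) and, by the Potter bounds for `φ`, bounded below by a
multiple of `K`.
-/

open Set Metric MeasureTheory Real Filter Topology

noncomputable section

/-- `f` satisfies the lower scaling condition at zero with index `b`. -/
def HasLowerScaling (f : ℝ → ℝ) (b : ℝ) : Prop :=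
  ∃ C : ℝ, 1 ≤ C ∧ ∀ s r : ℝ, 0 < s → s ≤ r → r ≤ 1 → C⁻¹ * (r / s) ^ b ≤ f r / f s

/-- `f` satisfies the upper scaling condition at zero with index `b`. -/
def HasUpperScaling (f : ℝ → ℝ) (b : ℝ) : Prop :=
  ∃ C : ℝ, 1 ≤ C ∧ ∀ s r : ℝ, 0 < s → s ≤ r → r ≤ 1 → f r / f s ≤ C * (r / s) ^ b

/-- The lower Matuszewska index of `f` at zero equals `β`,
i.e. `β` is the supremum of the indices for which the lower scaling condition holds. -/
def LowerIndexIs (f : ℝ → ℝ) (β : ℝ) : Prop :=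
  (∀ b : ℝ, b < β → HasLowerScaling f b) ∧ (∀ b : ℝ, β < b → ¬ HasLowerScaling f b)

/-- The upper Matuszewska index of `f` at zero equals `β`,
i.e. `β` is the infimum of the indices for which the upper scaling condition holds. -/
def UpperIndexIs (f : ℝ → ℝ) (β : ℝ) : Prop :=
  (∀ b : ℝ, β < b → HasUpperScaling f b) ∧ (∀ b : ℝ, b < β → ¬ HasUpperScaling f b)

/-- `f` is almost increasing on `(0,1]`. -/
def AlmostIncreasingOn01 (f : ℝ → ℝ) : Prop :=
  ∃ C : ℝ, 1 ≤ C ∧ ∀ s r : ℝ, 0 < s → s ≤ r → r ≤ 1 → f s ≤ C * f r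

/-- `f` is almost decreasing on `(0,1]`. -/
def AlmostDecreasingOn01 (f : ℝ → ℝ) : Prop :=
  ∃ C : ℝ, 1 ≤ C ∧ ∀ s r : ℝ, 0 < s → s ≤ r → r ≤ 1 → f r ≤ C * f s

/-- A positive Borel function on `(0,∞)`, equal to `1` on `[1,∞)`. -/
def StdFun (f : ℝ → ℝ) : Prop :=
  Measurable f ∧ (∀ r : ℝ, 0 < r → 0 < f r) ∧ (∀ r : ℝ, 1 ≤ r → f r = 1)

/-- The scaling condition for the slowly varying factor `ℓ`, with parameters `β₁, β₂`. -/
def EllScaling (l : ℝ → ℝ) (β₁ β₂ : ℝ) : Prop :=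
  ∀ ε : ℝ, 0 < ε → ∃ C : ℝ, 1 ≤ C ∧ ∀ s r : ℝ, 0 < s → s ≤ r → r ≤ 1 →
    C⁻¹ * (r / s) ^ (-(min ε β₁)) ≤ l r / l s ∧ l r / l s ≤ C * (r / s) ^ (min ε β₂)

/-- `l` has both Matuszewska indices at zero equal to `0`. -/
def SlowlyVaryingScaling (l : ℝ → ℝ) : Prop :=
  ∀ ε : ℝ, 0 < ε → ∃ C : ℝ, 1 ≤ C ∧ ∀ s r : ℝ, 0 < s → s ≤ r → r ≤ 1 →
    C⁻¹ * (r / s) ^ (-ε) ≤ l r / l s ∧ l r / l s ≤ C * (r / s) ^ ε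

/-- The distance to the boundary of `D`. -/
def dd {d : ℕ} (D : Set (EuclideanSpace ℝ (Fin d))) (x : EuclideanSpace ℝ (Fin d)) : ℝ :=
  Metric.infDist x (frontier D)

/-- The function `A_{f,g,h}(t,x,y)`. -/
def Afun {d : ℕ} (α : ℝ) (D : Set (EuclideanSpace ℝ (Fin d))) (f g h : ℝ → ℝ)
    (t : ℝ) (x y : EuclideanSpace ℝ (Fin d)) : ℝ :=
  f (max (min (dd D x) (dd D y)) (t ^ (1 / α)) / dist x y) *
  g (max (max (dd D x) (dd D y)) (t ^ (1 / α)) / dist x y) *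
  h (max (min (dd D x) (dd D y)) (t ^ (1 / α)) /
      min (max (max (dd D x) (dd D y)) (t ^ (1 / α))) (dist x y))

/-- The inward unit vector `𝐧ₓ = (x - Qₓ)/δ_D(x)`. -/
def nv {d : ℕ} (D : Set (EuclideanSpace ℝ (Fin d)))
    (Q : EuclideanSpace ℝ (Fin d) → EuclideanSpace ℝ (Fin d))
    (x : EuclideanSpace ℝ (Fin d)) : EuclideanSpace ℝ (Fin d) :=
  (dd D x)⁻¹ • (x - Q x)

/-- `∫_a^b A_{f,g,h}(t,x,x+u𝐧ₓ) A_{f,g,h}(t,x+u𝐧ₓ,y) u^{-α-1} du`. -/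
def Iint {d : ℕ} (α : ℝ) (D : Set (EuclideanSpace ℝ (Fin d)))
    (Q : EuclideanSpace ℝ (Fin d) → EuclideanSpace ℝ (Fin d))
    (f g h : ℝ → ℝ) (a b t : ℝ) (x y : EuclideanSpace ℝ (Fin d)) : ℝ :=
  ∫ u in Set.Ioo a b,
    Afun α D f g h t x (x + u • nv D Q x) * Afun α D f g h t (x + u • nv D Q x) y *
      u ^ (-α - 1)

/-- `∫_a^b f₀(k₂/u) f₂(u/rr) l(k₁/u) u^{-α-1} du`. -/
def Jint (α : ℝ) (f₀ f₂ l : ℝ → ℝ) (a b rr k₁ k₂ : ℝ) : ℝ :=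
  ∫ u in Set.Ioo a b, f₀ (k₂ / u) * f₂ (u / rr) * l (k₁ / u) * u ^ (-α - 1)

/-- The quantity `𝓘(t,x,y)` of Lemma 3.5(ii). -/
def sI {d : ℕ} (α : ℝ) (D : Set (EuclideanSpace ℝ (Fin d))) (Φ₀ φf lf : ℝ → ℝ)
    (t : ℝ) (x y : EuclideanSpace ℝ (Fin d)) : ℝ :=
  Afun α D Φ₀ Φ₀ (fun _ => (1 : ℝ)) t x y *
    ∫ u in Set.Ioo (min (max (max (dd D x) (dd D y)) (t ^ (1 / α))) (dist x y / 4))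
        (dist x y),
      lf (max (dd D x) (t ^ (1 / α)) / u) * lf (max (dd D y) (t ^ (1 / α)) / u) *
          φf (u / dist x y) /
        (lf (max (dd D x) (t ^ (1 / α)) / dist x y) *
          lf (max (dd D y) (t ^ (1 / α)) / dist x y)) / u


def PotterBounds (f : ℝ → ℝ) (C a b : ℝ) : Prop :=
  ∀ s r : ℝ, 0 < s → s ≤ r → r ≤ 1 → f s ≤ C * (r / s) ^ a * f r ∧ f r ≤ C * (r / s) ^ b * f s

namespace PotterBounds

variable {f : ℝ → ℝ} {C a b : ℝ}

lemma of_ratio (hC : 0 < C) (hpos : ∀ r, 0 < r → 0 < f r)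
    (h : ∀ s r : ℝ, 0 < s → s ≤ r → r ≤ 1 →
      C⁻¹ * (r / s) ^ (-a) ≤ f r / f s ∧ f r / f s ≤ C * (r / s) ^ b) :
    PotterBounds f C a b := by
  intro s r hs hsr hr
  have hfs := hpos s hs
  have hrs : 0 < (r / s) ^ a := Real.rpow_pos_of_pos (div_pos (hs.trans_le hsr) hs) a
  obtain ⟨h₁, h₂⟩ := h s r hs hsr hr
  rw [Real.rpow_neg (div_pos (hs.trans_le hsr) hs).le, le_div_iff₀ hfs] at h₁
  refine ⟨?_, (div_le_iff₀ hfs).mp h₂⟩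
  calc f s = C * (r / s) ^ a * (C⁻¹ * ((r / s) ^ a)⁻¹ * f s) := by field_simp
    _ ≤ C * (r / s) ^ a * f r := by gcongr

lemma le_mul_inv_rpow (hP : PotterBounds f C a b) (h1 : f 1 = 1) {v : ℝ} (hv : 0 < v)
    (hv1 : v ≤ 1) : f v ≤ C * v⁻¹ ^ a := by
  simpa [h1] using (hP v 1 hv hv1 le_rfl).1

lemma le_of_mem_Icc (hP : PotterBounds f C a b) (h1 : f 1 = 1) (hC : 0 ≤ C) (ha : 0 ≤ a)
    {c v : ℝ} (hc : 0 < c) (hv : v ∈ Icc c 1) : f v ≤ C * c⁻¹ ^ a := by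
  have hv0 := hc.trans_le hv.1
  calc f v ≤ C * v⁻¹ ^ a := hP.le_mul_inv_rpow h1 hv0 hv.2
    _ ≤ C * c⁻¹ ^ a := by gcongr; exact hv.1

lemma inv_le_of_mem_Icc (hP : PotterBounds f C a b) (h1 : f 1 = 1) (hC : 0 < C) (hb : 0 ≤ b)
    (hpos : ∀ r, 0 < r → 0 < f r) {c v : ℝ} (hc : 0 < c) (hv : v ∈ Icc c 1) :
    (C * c⁻¹ ^ b)⁻¹ ≤ f v := by
  have hv0 := hc.trans_le hv.1
  have h := (hP v 1 hv0 hv.2 le_rfl).2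
  rw [h1, one_div] at h
  rw [inv_le_iff_one_le_mul₀ (by positivity)]
  calc 1 ≤ C * v⁻¹ ^ b * f v := h
    _ ≤ C * c⁻¹ ^ b * f v := by gcongr; exacts [(hpos v hv0).le, hv.1]
    _ = f v * (C * c⁻¹ ^ b) := mul_comm _ _

lemma exists_pos_le (hP : PotterBounds f C a b) (h1 : f 1 = 1) (hC : 0 < C) (hb : 0 ≤ b)
    (hpos : ∀ r, 0 < r → 0 < f r) (h : ∃ c : ℝ, 0 < c ∧ ∀ᶠ s in 𝓝[>] (0 : ℝ), c ≤ f s) :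
    ∃ c₀ : ℝ, 0 < c₀ ∧ ∀ w ∈ Ioc (0 : ℝ) 1, c₀ ≤ f w := by
  obtain ⟨c, hc, hev⟩ := h
  obtain ⟨η, hη, hsub⟩ := mem_nhdsGT_iff_exists_Ioo_subset.mp hev
  have hη' : 0 < min η 1 := lt_min hη one_pos
  refine ⟨min c (C * (min η 1)⁻¹ ^ b)⁻¹, lt_min hc (by positivity), fun w hw => ?_⟩
  rcases lt_or_ge w (min η 1) with hwη | hwη
  · exact (min_le_left _ _).trans (hsub ⟨hw.1, hwη.trans_le (min_le_left _ _)⟩)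
  · exact (min_le_right _ _).trans (hP.inv_le_of_mem_Icc h1 hC hb hpos hη' ⟨hwη, hw.2⟩)

end PotterBounds

lemma SlowlyVaryingScaling.exists_potterBounds {f : ℝ → ℝ} (h : SlowlyVaryingScaling f)
    (hpos : ∀ r, 0 < r → 0 < f r) {ε : ℝ} (hε : 0 < ε) :
    ∃ C : ℝ, 0 < C ∧ PotterBounds f C ε ε := by
  obtain ⟨C, hC, hCf⟩ := h ε hε
  exact ⟨C, one_pos.trans_le hC, .of_ratio (one_pos.trans_le hC) hpos hCf⟩

lemma EllScaling.exists_potterBounds {f : ℝ → ℝ} {β₁ β₂ : ℝ} (h : EllScaling f β₁ β₂)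
    (hpos : ∀ r, 0 < r → 0 < f r) {ε : ℝ} (hε : 0 < ε) :
    ∃ C : ℝ, 0 < C ∧ PotterBounds f C (min ε β₁) (min ε β₂) := by
  obtain ⟨C, hC, hCf⟩ := h ε hε
  exact ⟨C, one_pos.trans_le hC, .of_ratio (one_pos.trans_le hC) hpos hCf⟩

lemma exists_lt_mul_pow_of_mul_le_succ {u : ℕ → ℝ} {p q : ℝ} (hu : 0 < u 0) (hp : 0 < p)
    (hpq : p < q) (hstep : ∀ n, q * u n ≤ u (n + 1)) (A : ℝ) : ∃ n, A * p ^ n < u n := by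
  have hgrow : ∀ n, q ^ n * u 0 ≤ u n := by
    intro n
    induction n with
    | zero => simp
    | succ n ih =>
      calc q ^ (n + 1) * u 0 = q * (q ^ n * u 0) := by ring
        _ ≤ q * u n := by gcongr; linarith
        _ ≤ u (n + 1) := hstep n
  obtain ⟨n, hn⟩ := (tendsto_pow_atTop_atTop_of_one_lt
    ((one_lt_div hp).mpr hpq) |>.eventually_gt_atTop (A / u 0)).exists
  refine ⟨n, ?_⟩
  rw [div_lt_iff₀ hu, div_pow, div_mul_eq_mul_div, lt_div_iff₀ (by positivity)] at hn
  exact hn.trans_le (hgrow n)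

def logIntegral (g : ℝ → ℝ) (a : ℝ) : ℝ := ∫ v in a..1, g v / v

lemma intervalIntegrable_div_id {g : ℝ → ℝ} {a b B : ℝ} (hg : Measurable g) (ha : 0 < a)
    (hab : a ≤ b) (hB : ∀ v ∈ Icc a b, ‖g v‖ ≤ B) :
    IntervalIntegrable (fun v => g v / v) volume a b := by
  rw [intervalIntegrable_iff_integrableOn_Icc_of_le hab]
  refine Measure.integrableOn_of_bounded (M := B / a) measure_Icc_lt_top.ne
    (hg.div measurable_id).aestronglyMeasurable ?_
  filter_upwards [ae_restrict_mem measurableSet_Icc] with v hv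
  rw [norm_div, Real.norm_of_nonneg (ha.trans_le hv.1).le]
  exact div_le_div₀ ((norm_nonneg _).trans (hB v hv)) (hB v hv) ha hv.1

lemma integral_comp_div_div_id (g : ℝ → ℝ) (s : ℝ) {r : ℝ} (hr : 0 < r) :
    ∫ u in s..r, g (u / r) / u = logIntegral g (s / r) := by
  have h : (fun u => g (u / r) / u) = fun u => r⁻¹ * (fun v => g v / v) (u / r) := by
    ext u
    field_simp
  rw [h, intervalIntegral.integral_const_mul,
    intervalIntegral.integral_comp_div (fun v => g v / v) hr.ne', div_self hr.ne', smul_eq_mul,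
    ← mul_assoc, inv_mul_cancel₀ hr.ne', one_mul, logIntegral]

section StdFun

variable {φ : ℝ → ℝ} {C e : ℝ}

lemma StdFun.intervalIntegrable_div_id (hφ : StdFun φ) (hP : PotterBounds φ C e e)
    (hC : 0 ≤ C) (he : 0 ≤ e) {a b : ℝ} (ha : 0 < a) (hab : a ≤ b) (hb : b ≤ 1) :
    IntervalIntegrable (fun v => φ v / v) volume a b :=
  _root_.intervalIntegrable_div_id hφ.1 ha hab fun v hv => by
    rw [Real.norm_of_nonneg (hφ.2.1 v (ha.trans_le hv.1)).le]
    exact hP.le_of_mem_Icc (hφ.2.2 1 le_rfl) hC he ha ⟨hv.1, hv.2.trans hb⟩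

lemma StdFun.logIntegral_eq_add (hφ : StdFun φ) (hP : PotterBounds φ C e e)
    (hC : 0 ≤ C) (he : 0 ≤ e) {a b : ℝ} (ha : 0 < a) (hab : a ≤ b) (hb : b ≤ 1) :
    logIntegral φ a = (∫ v in a..b, φ v / v) + logIntegral φ b :=
  (intervalIntegral.integral_add_adjacent_intervals
    (hφ.intervalIntegrable_div_id hP hC he ha hab hb)
    (hφ.intervalIntegrable_div_id hP hC he (ha.trans_le hab) hb le_rfl)).symm

lemma StdFun.logIntegral_anti (hφ : StdFun φ) (hP : PotterBounds φ C e e)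
    (hC : 0 ≤ C) (he : 0 ≤ e) {a b : ℝ} (ha : 0 < a) (hab : a ≤ b) (hb : b ≤ 1) :
    logIntegral φ b ≤ logIntegral φ a := by
  rw [hφ.logIntegral_eq_add hP hC he ha hab hb, le_add_iff_nonneg_left]
  exact intervalIntegral.integral_nonneg hab fun v hv =>
    div_nonneg (hφ.2.1 v (ha.trans_le hv.1)).le (ha.trans_le hv.1).le

lemma StdFun.logIntegral_pos (hφ : StdFun φ) (hP : PotterBounds φ C e e)
    (hC : 0 ≤ C) (he : 0 ≤ e) {a : ℝ} (ha : 0 < a) (ha1 : a < 1) : 0 < logIntegral φ a :=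
  intervalIntegral.intervalIntegral_pos_of_pos_on
    (hφ.intervalIntegrable_div_id hP hC he ha ha1.le le_rfl)
    (fun v hv => div_pos (hφ.2.1 v (ha.trans hv.1)) (ha.trans hv.1)) ha1

lemma StdFun.logIntegral_add_le_logIntegral_half (hφ : StdFun φ) (hP : PotterBounds φ C 1 1)
    (hC : 0 < C) {a : ℝ} (ha : 0 < a) (ha1 : a ≤ 1) :
    logIntegral φ a + φ a / (4 * C) ≤ logIntegral φ (a / 2) := by
  rw [hφ.logIntegral_eq_add hP hC.le zero_le_one (half_pos ha) (half_le_self ha.le) ha1,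
    add_comm, add_le_add_iff_right]
  have hlow : ∀ v ∈ Icc (a / 2) a, φ a / (2 * C) / a ≤ φ v / v := by
    intro v hv
    have hv0 : 0 < v := (half_pos ha).trans_le hv.1
    have h := (hP v a hv0 hv.2 ha1).2
    rw [Real.rpow_one] at h
    rw [div_div, div_le_div_iff₀ (by positivity) hv0]
    calc φ a * v ≤ C * (a / v) * φ v * v := by gcongr
      _ = C * a * φ v := by field_simp
      _ ≤ φ v * (2 * C * a) := by nlinarith [mul_pos (mul_pos hC ha) (hφ.2.1 v hv0)]
  calc φ a / (4 * C) = ∫ _ in a / 2..a, φ a / (2 * C) / a := by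
        rw [intervalIntegral.integral_const, smul_eq_mul]; field_simp; ring
    _ ≤ ∫ v in a / 2..a, φ v / v :=
        intervalIntegral.integral_mono_on (half_le_self ha.le) intervalIntegrable_const
          (hφ.intervalIntegrable_div_id hP hC.le zero_le_one (half_pos ha)
            (half_le_self ha.le) ha1) hlow

end StdFun

lemma StdFun.mul_logIntegral_le_logIntegral_half {φ : ℝ → ℝ} (hφ : StdFun φ)
    {C K : ℝ} (hP : PotterBounds φ C 1 1) (hC : 0 < C) (hK : 0 < K) {a : ℝ} (ha : 0 < a)
    (ha1 : a ≤ 1) (hF : logIntegral φ a ≤ K * φ a) :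
    (1 + (4 * C * K)⁻¹) * logIntegral φ a ≤ logIntegral φ (a / 2) :=
  calc (1 + (4 * C * K)⁻¹) * logIntegral φ a
      ≤ logIntegral φ a + (4 * C * K)⁻¹ * (K * φ a) := by rw [add_mul, one_mul]; gcongr
    _ = logIntegral φ a + φ a / (4 * C) := by field_simp
    _ ≤ logIntegral φ (a / 2) := hφ.logIntegral_add_le_logIntegral_half hP hC ha ha1

lemma exists_pos_two_rpow_lt {q : ℝ} (hq : 1 < q) : ∃ ε : ℝ, 0 < ε ∧ (2 : ℝ) ^ ε < q := by
  refine ⟨Real.logb 2 q / 2, half_pos (Real.logb_pos one_lt_two hq), ?_⟩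
  conv_rhs => rw [← Real.rpow_logb two_pos (by norm_num) (zero_lt_one.trans hq)]
  exact Real.rpow_lt_rpow_of_exponent_lt one_lt_two (half_lt_self (Real.logb_pos one_lt_two hq))

lemma StdFun.frequently_mul_lt_logIntegral {φ : ℝ → ℝ} (hφ : StdFun φ)
    (hsv : SlowlyVaryingScaling φ) {K : ℝ} (hK : 0 < K) :
    ∃ᶠ a in 𝓝[>] (0 : ℝ), K * φ a < logIntegral φ a := by
  obtain ⟨C, hC, hP⟩ := hsv.exists_potterBounds hφ.2.1 one_pos
  intro hev
  simp only [not_lt] at hev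
  obtain ⟨a₁, ha₁ : 0 < a₁, hsub⟩ := mem_nhdsGT_iff_exists_Ioo_subset.mp hev
  set a₀ := min a₁ 1 / 2
  have ha₀ : 0 < a₀ := half_pos (lt_min ha₁ one_pos)
  have ha₀a₁ : a₀ < a₁ := (half_lt_self (lt_min ha₁ one_pos)).trans_le (min_le_left _ _)
  have ha₀1 : a₀ < 1 := (half_lt_self (lt_min ha₁ one_pos)).trans_le (min_le_right _ _)
  have hmem : ∀ n : ℕ, a₀ / 2 ^ n ∈ Ioo 0 a₁ ∧ a₀ / 2 ^ n ≤ 1 := fun n => by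
    have : a₀ / 2 ^ n ≤ a₀ := div_le_self ha₀.le (one_le_pow₀ one_le_two)
    exact ⟨⟨by positivity, this.trans_lt ha₀a₁⟩, this.trans ha₀1.le⟩
  set u : ℕ → ℝ := fun n => logIntegral φ (a₀ / 2 ^ n)
  have hstep : ∀ n, (1 + (4 * C * K)⁻¹) * u n ≤ u (n + 1) := fun n => by
    simpa only [u, pow_succ, div_div] using hφ.mul_logIntegral_le_logIntegral_half hP hC hK
      (hmem n).1.1 (hmem n).2 (hsub (hmem n).1)
  obtain ⟨ε, hε, h2ε⟩ := exists_pos_two_rpow_lt (q := 1 + (4 * C * K)⁻¹)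
    (by simp only [lt_add_iff_pos_right]; positivity)
  obtain ⟨C', -, hP'⟩ := hsv.exists_potterBounds hφ.2.1 hε
  obtain ⟨n, hn⟩ := exists_lt_mul_pow_of_mul_le_succ (u := u)
    (by simpa only [u, pow_zero, div_one] using hφ.logIntegral_pos hP hC.le zero_le_one ha₀ ha₀1)
    (by positivity) h2ε hstep (K * C' * a₀⁻¹ ^ ε)
  have hbound : u n ≤ K * C' * a₀⁻¹ ^ ε * (2 ^ ε) ^ n :=
    calc u n ≤ K * φ (a₀ / 2 ^ n) := hsub (hmem n).1
      _ ≤ K * (C' * (a₀ / 2 ^ n)⁻¹ ^ ε) := by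
          gcongr
          exact hP'.le_mul_inv_rpow (hφ.2.2 1 le_rfl) (hmem n).1.1 (hmem n).2
      _ = K * C' * a₀⁻¹ ^ ε * (2 ^ ε) ^ n := by
          rw [inv_div, div_eq_mul_inv, Real.mul_rpow (by positivity) (by positivity),
            ← Real.rpow_pow_comm zero_le_two]
          ring
  exact hn.not_ge hbound

def boundaryRatio (l φ : ℝ → ℝ) (b : ℝ) : ℝ :=
  logIntegral (fun v => l (b / v) ^ 2 * φ v) b / φ b

section BoundaryRatio

variable {l φ : ℝ → ℝ} {Cl Cφ a a' c : ℝ}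

lemma norm_boundaryIntegrand_le (hl : StdFun l) (hφ : StdFun φ) (hPl : PotterBounds l Cl a a')
    (hPφ : PotterBounds φ Cφ 1 1) (hCl : 0 < Cl) (hCφ : 0 < Cφ) (ha : 0 ≤ a) (hc : 0 < c)
    {b v : ℝ} (hcb : c ≤ b) (hv : v ∈ Icc b 1) :
    ‖l (b / v) ^ 2 * φ v‖ ≤ (Cl * c⁻¹ ^ a) ^ 2 * (Cφ * c⁻¹) := by
  have hv0 : 0 < v := hc.trans_le (hcb.trans hv.1)
  have hbv : b / v ∈ Icc c 1 :=
    ⟨hcb.trans (le_div_self (hc.trans_le hcb).le hv0 hv.2), div_le_one_of_le₀ hv.1 hv0.le⟩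
  have hlb := hl.2.1 _ (hc.trans_le hbv.1)
  have hφv := hφ.2.1 v hv0
  have hφv' : φ v ≤ Cφ * c⁻¹ := by
    simpa using hPφ.le_of_mem_Icc (hφ.2.2 1 le_rfl) hCφ.le zero_le_one hc ⟨hcb.trans hv.1, hv.2⟩
  rw [Real.norm_of_nonneg (by positivity)]
  exact mul_le_mul
    (pow_le_pow_left₀ hlb.le (hPl.le_of_mem_Icc (hl.2.2 1 le_rfl) hCl.le ha hc hbv) 2)
    hφv' hφv.le (by positivity)

lemma sq_mul_logIntegral_div_le_boundaryRatio (hl : StdFun l) (hφ : StdFun φ)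
    (hPl : PotterBounds l Cl a a') (hPφ : PotterBounds φ Cφ 1 1) (hCl : 0 < Cl) (hCφ : 0 < Cφ)
    (ha : 0 ≤ a) {c₀ : ℝ} (hc₀ : 0 ≤ c₀) (hlc₀ : ∀ w ∈ Ioc (0 : ℝ) 1, c₀ ≤ l w) {b : ℝ}
    (hb : 0 < b) (hb1 : b ≤ 1) :
    c₀ ^ 2 * logIntegral φ b / φ b ≤ boundaryRatio l φ b := by
  have hint : IntervalIntegrable (fun v => l (b / v) ^ 2 * φ v / v) volume b 1 :=
    intervalIntegrable_div_id ((hl.1.comp (measurable_const.div measurable_id)).pow_const 2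
      |>.mul hφ.1) hb hb1
      fun v hv => norm_boundaryIntegrand_le hl hφ hPl hPφ hCl hCφ ha hb le_rfl hv
  rw [boundaryRatio, logIntegral, ← intervalIntegral.integral_const_mul]
  refine div_le_div_of_nonneg_right ?_ (hφ.2.1 b hb).le
  refine intervalIntegral.integral_mono_on hb1
    ((hφ.intervalIntegrable_div_id hPφ hCφ.le zero_le_one hb hb1 le_rfl).const_mul _) hint ?_
  intro v hv
  have hv0 : 0 < v := hb.trans_le hv.1
  rw [← mul_div_assoc]
  refine div_le_div_of_nonneg_right (mul_le_mul_of_nonneg_right ?_ (hφ.2.1 v hv0).le) hv0.le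
  exact pow_le_pow_left₀ hc₀ (hlc₀ _ ⟨div_pos hb hv0, div_le_one_of_le₀ hv.1 hv0.le⟩) 2

lemma bddAbove_boundaryRatio (hl : StdFun l) (hφ : StdFun φ) (hPl : PotterBounds l Cl a a')
    (hPφ : PotterBounds φ Cφ 1 1) (hCl : 0 < Cl) (hCφ : 0 < Cφ) (ha : 0 ≤ a) (hc : 0 < c) :
    BddAbove (boundaryRatio l φ '' Icc c 1) := by
  set B := (Cl * c⁻¹ ^ a) ^ 2 * (Cφ * c⁻¹)
  refine ⟨B / c / (Cφ * c⁻¹)⁻¹, forall_mem_image.mpr fun b hb => ?_⟩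
  have hb0 : 0 < b := hc.trans_le hb.1
  have hint : logIntegral (fun v => l (b / v) ^ 2 * φ v) b ≤ B / c :=
    calc _ ≤ ‖logIntegral (fun v => l (b / v) ^ 2 * φ v) b‖ := le_norm_self _
      _ ≤ B / c * |1 - b| := by
          refine intervalIntegral.norm_integral_le_of_norm_le_const fun v hv => ?_
          rw [uIoc_of_le hb.2] at hv
          have hv0 : 0 < v := hb0.trans hv.1
          rw [norm_div, Real.norm_of_nonneg hv0.le]
          exact div_le_div₀ (by positivity)
            (norm_boundaryIntegrand_le hl hφ hPl hPφ hCl hCφ ha hc hb.1 ⟨hv.1.le, hv.2⟩) hc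
            (hb.1.trans hv.1.le)
      _ ≤ B / c := by
          rw [abs_of_nonneg (by linarith [hb.2])]
          exact mul_le_of_le_one_right (by positivity) (by linarith [hb.1])
  exact div_le_div₀ (by positivity) hint (by positivity)
    (by simpa using hPφ.inv_le_of_mem_Icc (hφ.2.2 1 le_rfl) hCφ zero_le_one hφ.2.1 hc hb)

lemma le_boundaryRatio_of_mul_lt_logIntegral (hl : StdFun l) (hφ : StdFun φ)
    (hPl : PotterBounds l Cl a a') (hPφ : PotterBounds φ Cφ 1 1) (hCl : 0 < Cl) (hCφ : 0 < Cφ)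
    (ha : 0 ≤ a) {c₀ : ℝ} (hc₀ : 0 ≤ c₀) (hlc₀ : ∀ w ∈ Ioc (0 : ℝ) 1, c₀ ≤ l w)
    {a₀ K b : ℝ} (ha₀ : 0 < a₀) (ha₀1 : a₀ ≤ 1) (hK : 0 ≤ K)
    (hgrowth : K * φ a₀ < logIntegral φ a₀) (hb : b ∈ Icc (a₀ / 4) a₀) :
    c₀ ^ 2 * K / (4 * Cφ) ≤ boundaryRatio l φ b := by
  have hb0 : 0 < b := by linarith [hb.1]
  have hφa₀ := hφ.2.1 a₀ ha₀
  have hφb : φ b ≤ 4 * Cφ * φ a₀ :=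
    calc φ b ≤ Cφ * (a₀ / b) ^ (1 : ℝ) * φ a₀ := (hPφ b a₀ hb0 hb.2 ha₀1).1
      _ ≤ Cφ * 4 * φ a₀ := by
          rw [Real.rpow_one]; gcongr; rw [div_le_iff₀ hb0]; linarith [hb.1]
      _ = 4 * Cφ * φ a₀ := by ring
  calc c₀ ^ 2 * K / (4 * Cφ) = c₀ ^ 2 * (K * φ a₀) / (4 * Cφ * φ a₀) := by field_simp
    _ ≤ c₀ ^ 2 * logIntegral φ a₀ / φ b :=
        div_le_div₀ (mul_nonneg (sq_nonneg _) ((mul_nonneg hK hφa₀.le).trans hgrowth.le))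
          (mul_le_mul_of_nonneg_left hgrowth.le (sq_nonneg _)) (hφ.2.1 b hb0) hφb
    _ ≤ c₀ ^ 2 * logIntegral φ b / φ b := by
        gcongr
        · exact (hφ.2.1 b hb0).le
        · exact hφ.logIntegral_anti hPφ hCφ.le zero_le_one hb0 hb.2 ha₀1
    _ ≤ boundaryRatio l φ b :=
        sq_mul_logIntegral_div_le_boundaryRatio hl hφ hPl hPφ hCl hCφ ha hc₀ hlc₀ hb0
          (hb.2.trans ha₀1)

end BoundaryRatio

lemma infDist_frontier_pos {E : Type*} [NormedAddCommGroup E] [NormedSpace ℝ E] [Nontrivial E]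
    {D : Set E} (hD : IsOpen D) (hDb : Bornology.IsBounded D) {x : E} (hx : x ∈ D) :
    0 < infDist x (frontier D) := by
  have hne : (frontier D).Nonempty :=
    nonempty_frontier_iff.mpr ⟨⟨x, hx⟩, fun h => NormedSpace.unbounded_univ ℝ E (h ▸ hDb)⟩
  refine (isClosed_frontier.notMem_iff_infDist_pos hne).mp fun hxD => ?_
  rw [hD.frontier_eq] at hxD
  exact hxD.2 hx

def sIRatio {d : ℕ} (α : ℝ) (D : Set (EuclideanSpace ℝ (Fin d))) (Φ₀ Φ₁ Φ₂ φ l : ℝ → ℝ) (t : ℝ)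
    (x y : EuclideanSpace ℝ (Fin d)) : ℝ :=
  t * dist x y ^ (-α) * sI α D Φ₀ φ l t x y / Afun α D Φ₁ Φ₂ l t x y

section Kernel

variable {d : ℕ} {D : Set (EuclideanSpace ℝ (Fin d))} {α : ℝ} {x y : EuclideanSpace ℝ (Fin d)}

lemma tendsto_dd_nhdsWithin_zero {Q : EuclideanSpace ℝ (Fin d)} (hQ : Q ∈ frontier D)
    (s : Set (EuclideanSpace ℝ (Fin d))) : Tendsto (dd D) (𝓝[s] Q) (𝓝 0) := by
  have h := (continuous_infDist_pt (frontier D)).tendsto Q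
  rw [infDist_zero_of_mem hQ] at h
  exact h.mono_left nhdsWithin_le_nhds

lemma Afun_eq_Afun_zero (hα : α ≠ 0) (f g h : ℝ → ℝ) {t : ℝ}
    (ht : t ^ (1 / α) ≤ min (dd D x) (dd D y)) :
    Afun α D f g h t x y = Afun α D f g h 0 x y := by
  have hmin : 0 ≤ min (dd D x) (dd D y) := le_min infDist_nonneg infDist_nonneg
  simp only [Afun, Real.zero_rpow (one_div_ne_zero hα), max_eq_left ht, max_eq_left hmin,
    max_eq_left (ht.trans (min_le_max)), max_eq_left (hmin.trans min_le_max)]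

lemma sI_eq_sI_zero (hα : α ≠ 0) (Φ₀ φ l : ℝ → ℝ) {t : ℝ}
    (ht : t ^ (1 / α) ≤ min (dd D x) (dd D y)) :
    sI α D Φ₀ φ l t x y = sI α D Φ₀ φ l 0 x y := by
  have hx : 0 ≤ dd D x := infDist_nonneg
  have hy : 0 ≤ dd D y := infDist_nonneg
  simp only [sI, Afun_eq_Afun_zero hα _ _ _ ht, Real.zero_rpow (one_div_ne_zero hα),
    max_eq_left (ht.trans (min_le_max)), max_eq_left (le_max_of_le_left hx),
    max_eq_left (ht.trans (min_le_left _ _)), max_eq_left (ht.trans (min_le_right _ _)),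
    max_eq_left hx, max_eq_left hy]

lemma tendsto_sIRatio_nhdsGT_zero (hα : 0 < α) (hδ : 0 < min (dd D x) (dd D y))
    (Φ₀ Φ₁ Φ₂ φ l : ℝ → ℝ) :
    Tendsto (fun t => sIRatio α D Φ₀ Φ₁ Φ₂ φ l t x y) (𝓝[>] 0) (𝓝 0) := by
  have hτ : ∀ᶠ t : ℝ in 𝓝[>] 0, t ^ (1 / α) < min (dd D x) (dd D y) := by
    have h := (Real.continuousAt_rpow_const 0 (1 / α) (Or.inr (by positivity))).tendsto
    rw [Real.zero_rpow (one_div_ne_zero hα.ne')] at h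
    exact (h.mono_left nhdsWithin_le_nhds).eventually_lt_const hδ
  have hlin : Tendsto (fun t : ℝ => t * (dist x y ^ (-α) * sI α D Φ₀ φ l 0 x y /
      Afun α D Φ₁ Φ₂ l 0 x y)) (𝓝[>] 0) (𝓝 0) :=
    tendsto_nhdsWithin_of_tendsto_nhds (by simpa using (continuous_mul_const _).tendsto (0 : ℝ))
  refine hlin.congr' (hτ.mono fun t ht => ?_)
  dsimp only [sIRatio]
  rw [sI_eq_sI_zero hα.ne' _ _ _ ht.le, Afun_eq_Afun_zero hα.ne' _ _ _ ht.le]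
  ring

variable {β₁ Cφ Cl a' c₀ : ℝ} {φ Φ₀ Φ₁ Φ₂ l : ℝ → ℝ}

lemma sIRatio_eq_boundaryRatio (hα : 0 < α)
    (hΦ₁def : ∀ r : ℝ, Φ₁ r = min 1 r ^ β₁)
    (hΦ₂def : ∀ r : ℝ, Φ₂ r = min 1 r ^ (α + β₁) * φ r)
    (hΦ₀def : ∀ r : ℝ, Φ₀ r = Φ₁ r * l r)
    (hφ : StdFun φ) (hl : StdFun l) {t : ℝ} (ht : 0 < t)
    (hx : dd D x ≤ t ^ (1 / α)) (hy : dd D y ≤ t ^ (1 / α)) (hr : 4 * t ^ (1 / α) ≤ dist x y) :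
    sIRatio α D Φ₀ Φ₁ Φ₂ φ l t x y = boundaryRatio l φ (t ^ (1 / α) / dist x y) := by
  simp only [sIRatio, sI, Afun, boundaryRatio]
  set τ := t ^ (1 / α) with hτ
  set r := dist x y
  have hτ0 : 0 < τ := Real.rpow_pos_of_pos ht _
  have hr0 : 0 < r := by linarith
  simp only [max_eq_right hx, max_eq_right hy, max_eq_right (min_le_of_left_le hx),
    max_eq_right (max_le hx hy), min_eq_left (show τ ≤ r / 4 by linarith),
    min_eq_left (show τ ≤ r by linarith), div_self hτ0.ne', hΦ₀def, hΦ₁def, hΦ₂def,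
    hl.2.2 1 le_rfl]
  set b := τ / r
  have hb0 : 0 < b := div_pos hτ0 hr0
  have hb1 : b ≤ 1 := (div_le_one hr0).mpr (by linarith)
  have hpow : t * r ^ (-α) = b ^ α := by
    rw [Real.div_rpow hτ0.le hr0.le, hτ, ← Real.rpow_mul ht.le, one_div, inv_mul_cancel₀ hα.ne',
      Real.rpow_one, Real.rpow_neg hr0.le, div_eq_mul_inv]
  have hint : ∫ u in Ioo τ r, l (τ / u) * l (τ / u) * φ (u / r) / (l b * l b) / u
      = logIntegral (fun v => l (b / v) ^ 2 * φ v) b / (l b * l b) := by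
    rw [← integral_Ioc_eq_integral_Ioo, ← intervalIntegral.integral_of_le (by linarith),
      ← integral_comp_div_div_id _ _ hr0, ← intervalIntegral.integral_div]
    congr 1
    ext u
    rw [div_div_div_cancel_right₀ hr0.ne']
    ring
  have hφb := hφ.2.1 b hb0
  have hlb := hl.2.1 b hb0
  rw [hint, min_eq_right hb1, Real.rpow_add hb0, hpow]
  field_simp

lemma eventually_dd_lt_and_dist_mem_Ioo {Q Q' : EuclideanSpace ℝ (Fin d)} (hQ : Q ∈ frontier D)
    (hQ' : Q' ∈ frontier D) (hne : Q ≠ Q') {τ : ℝ} (hτ : 0 < τ) :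
    ∀ᶠ p in 𝓝[D] Q ×ˢ 𝓝[D] Q', dd D p.1 < τ ∧ dd D p.2 < τ ∧
      dist p.1 p.2 ∈ Ioo (dist Q Q' / 2) (2 * dist Q Q') := by
  have hR : 0 < dist Q Q' := dist_pos.mpr hne
  exact (((tendsto_dd_nhdsWithin_zero hQ D).eventually_lt_const hτ).prod_inl _).and
    ((((tendsto_dd_nhdsWithin_zero hQ' D).eventually_lt_const hτ).prod_inr _).and
      (((tendsto_fst.mono_right nhdsWithin_le_nhds).dist
        (tendsto_snd.mono_right nhdsWithin_le_nhds)).eventually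
          (Ioo_mem_nhds (by linarith) (by linarith))))

lemma le_liminf_sIRatio_of_mul_lt_logIntegral (hα : 0 < α)
    (hΦ₁def : ∀ r : ℝ, Φ₁ r = min 1 r ^ β₁) (hΦ₂def : ∀ r : ℝ, Φ₂ r = min 1 r ^ (α + β₁) * φ r)
    (hΦ₀def : ∀ r : ℝ, Φ₀ r = Φ₁ r * l r) (hφ : StdFun φ) (hl : StdFun l)
    (hPφ : PotterBounds φ Cφ 1 1) (hPl : PotterBounds l Cl (min 1 β₁) a') (hCφ : 0 < Cφ)
    (hCl : 0 < Cl) (hβ₁ : 0 ≤ β₁) (hc₀ : 0 ≤ c₀) (hlc₀ : ∀ w ∈ Ioc (0 : ℝ) 1, c₀ ≤ l w)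
    {Q Q' : EuclideanSpace ℝ (Fin d)} (hQ : Q ∈ frontier D) (hQ' : Q' ∈ frontier D)
    (hne : Q ≠ Q') {a K : ℝ} (ha : a ∈ Ioo (0 : ℝ) (1 / 4)) (hK : 0 ≤ K)
    (hgrowth : K * φ a < logIntegral φ a) :
    c₀ ^ 2 * K / (4 * Cφ) ≤ liminf (fun p => sIRatio α D Φ₀ Φ₁ Φ₂ φ l
      ((a * dist Q Q' / 2) ^ α) p.1 p.2) (𝓝[D] Q ×ˢ 𝓝[D] Q') := by
  have hβ : 0 ≤ min 1 β₁ := le_min zero_le_one hβ₁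
  have : (𝓝[D] Q ×ˢ 𝓝[D] Q').NeBot :=
    prod_neBot.mpr ⟨mem_closure_iff_nhdsWithin_neBot.mp (frontier_subset_closure hQ),
      mem_closure_iff_nhdsWithin_neBot.mp (frontier_subset_closure hQ')⟩
  set τ := a * dist Q Q' / 2 with hτdef
  have hτ : 0 < τ := by have := ha.1; have := dist_pos.mpr hne; positivity
  have hτα : (τ ^ α) ^ (1 / α) = τ := by
    rw [← Real.rpow_mul hτ.le, mul_one_div_cancel hα.ne', Real.rpow_one]
  have hreduce : ∀ᶠ p in 𝓝[D] Q ×ˢ 𝓝[D] Q',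
      sIRatio α D Φ₀ Φ₁ Φ₂ φ l (τ ^ α) p.1 p.2 = boundaryRatio l φ (τ / dist p.1 p.2) ∧
        τ / dist p.1 p.2 ∈ Icc (a / 4) a := by
    refine (eventually_dd_lt_and_dist_mem_Ioo hQ hQ' hne hτ).mono fun p ⟨hx, hy, hr⟩ => ⟨?_, ?_⟩
    · have hr4 : 4 * τ ≤ dist p.1 p.2 := by
        nlinarith [mul_pos (sub_pos.mpr ha.2) (dist_pos.mpr hne), hr.1]
      rw [sIRatio_eq_boundaryRatio hα hΦ₁def hΦ₂def hΦ₀def hφ hl (by positivity)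
        (by rw [hτα]; exact hx.le) (by rw [hτα]; exact hy.le) (by rw [hτα]; exact hr4), hτα]
    · have hr0 : 0 < dist p.1 p.2 := by linarith [hr.1, dist_pos.mpr hne]
      rw [mem_Icc, le_div_iff₀ hr0, div_le_iff₀ hr0]
      constructor <;> nlinarith [mul_lt_mul_of_pos_left hr.2 ha.1, mul_lt_mul_of_pos_left hr.1 ha.1]
  obtain ⟨B, hB⟩ := bddAbove_boundaryRatio hl hφ hPl hPφ hCl hCφ hβ (by linarith [ha.1] : 0 < a / 4)
  refine le_liminf_of_le (isCoboundedUnder_ge_of_eventually_le _ (x := B)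
    (hreduce.mono fun p hp => ?_)) (hreduce.mono fun p hp => ?_)
  · rw [hp.1]
    exact hB (mem_image_of_mem _ ⟨hp.2.1, hp.2.2.trans (by linarith [ha.2])⟩)
  · rw [hp.1]
    exact le_boundaryRatio_of_mul_lt_logIntegral hl hφ hPl hPφ hCl hCφ hβ hc₀ hlc₀ ha.1
      (by linarith [ha.2]) hK hgrowth hp.2

lemma frequently_le_liminf_sIRatio (hα : 0 < α) (hβ₁ : 0 ≤ β₁)
    (hφ : StdFun φ) (hφscale : SlowlyVaryingScaling φ)
    (hΦ₁def : ∀ r : ℝ, Φ₁ r = min 1 r ^ β₁)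
    (hΦ₂def : ∀ r : ℝ, Φ₂ r = min 1 r ^ (α + β₁) * φ r)
    (hl : StdFun l) (hlscale : EllScaling l β₁ (α + β₁))
    (hlliminf : ∃ c : ℝ, 0 < c ∧ ∀ᶠ s in 𝓝[>] (0 : ℝ), c ≤ l s)
    (hΦ₀def : ∀ r : ℝ, Φ₀ r = Φ₁ r * l r)
    {Q Q' : EuclideanSpace ℝ (Fin d)} (hQ : Q ∈ frontier D) (hQ' : Q' ∈ frontier D) (hne : Q ≠ Q')
    (M : ℝ) :
    ∃ᶠ t in 𝓝[>] (0 : ℝ), M ≤ liminf (fun p => sIRatio α D Φ₀ Φ₁ Φ₂ φ l t p.1 p.2)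
      (𝓝[D] Q ×ˢ 𝓝[D] Q') := by
  obtain ⟨Cφ, hCφ, hPφ⟩ := hφscale.exists_potterBounds hφ.2.1 one_pos
  obtain ⟨Cl, hCl, hPl⟩ := hlscale.exists_potterBounds hl.2.1 one_pos
  obtain ⟨c₀, hc₀, hlc₀⟩ := hPl.exists_pos_le (hl.2.2 1 le_rfl) hCl
    (le_min zero_le_one (by linarith)) hl.2.1 hlliminf
  set K := 4 * Cφ * max M 1 / c₀ ^ 2
  have hK : 0 < K := by positivity
  have hMK : M ≤ c₀ ^ 2 * K / (4 * Cφ) := by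
    rw [show c₀ ^ 2 * K / (4 * Cφ) = max M 1 by simp only [K]; field_simp]
    exact le_max_left _ _
  have hT : Tendsto (fun a : ℝ => (a * dist Q Q' / 2) ^ α) (𝓝[>] 0) (𝓝[>] 0) := by
    refine tendsto_nhdsWithin_iff.mpr ⟨?_, eventually_nhdsWithin_of_forall fun a (ha : 0 < a) =>
      mem_Ioi.mpr (by have := dist_pos.mpr hne; positivity)⟩
    have hcont : Continuous fun a : ℝ => (a * dist Q Q' / 2) ^ α :=
      ((continuous_mul_const _).div_const 2).rpow_const fun _ => Or.inr hα.le
    simpa [Real.zero_rpow hα.ne'] using hcont.tendsto' 0 _ rfl |>.mono_left nhdsWithin_le_nhds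
  refine ((frequently_map (m := fun a : ℝ => (a * dist Q Q' / 2) ^ α)).mpr ?_).filter_mono hT
  exact ((hφ.frequently_mul_lt_logIntegral hφscale hK).and_eventually
    (Ioo_mem_nhdsGT (by norm_num))).mono fun a ha => hMK.trans
      (le_liminf_sIRatio_of_mul_lt_logIntegral hα hΦ₁def hΦ₂def hΦ₀def hφ hl hPφ hPl hCφ hCl hβ₁
        hc₀.le hlc₀ hQ hQ' hne ha.2 hK.le ha.1)

end Kernel

theorem statement_9_general
    (d : ℕ) (hd : 2 ≤ d)
    (D : Set (EuclideanSpace ℝ (Fin d))) (hDopen : IsOpen D)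
    (hDbdd : Bornology.IsBounded D)
    (α β₁ : ℝ) (hα0 : 0 < α) (hβ₁ : 0 ≤ β₁)
    (φf : ℝ → ℝ) (hφ : StdFun φf) (hφscale : SlowlyVaryingScaling φf)
    (Φ₁ Φ₂ l : ℝ → ℝ)
    (hΦ₁def : ∀ r : ℝ, Φ₁ r = min 1 r ^ β₁)
    (hΦ₂def : ∀ r : ℝ, Φ₂ r = min 1 r ^ (α + β₁) * φf r)
    (hl : StdFun l) (hlscale : EllScaling l β₁ (α + β₁))
    (hlliminf : ∃ c : ℝ, 0 < c ∧ ∀ᶠ s in 𝓝[>] (0 : ℝ), c ≤ l s)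
    (Φ₀ : ℝ → ℝ) (hΦ₀def : ∀ r : ℝ, Φ₀ r = Φ₁ r * l r) :
    (∀ x ∈ D, ∀ y ∈ D, x ≠ y →
      Tendsto (fun t : ℝ =>
          t * dist x y ^ (-α) * sI α D Φ₀ φf l t x y / Afun α D Φ₁ Φ₂ l t x y)
        (𝓝[>] (0 : ℝ)) (𝓝 0)) ∧
    (∀ Qb ∈ frontier D, ∀ Qb' ∈ frontier D, Qb ≠ Qb' →
      ∀ M : ℝ, ∃ᶠ t in 𝓝[>] (0 : ℝ),
        M ≤ Filter.liminf
            (fun p : EuclideanSpace ℝ (Fin d) × EuclideanSpace ℝ (Fin d) =>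
              t * dist p.1 p.2 ^ (-α) * sI α D Φ₀ φf l t p.1 p.2 /
                Afun α D Φ₁ Φ₂ l t p.1 p.2)
            ((𝓝[D] Qb) ×ˢ (𝓝[D] Qb'))) := by
  have : Nonempty (Fin d) := ⟨⟨0, by omega⟩⟩
  refine ⟨fun x hx y hy _ => ?_, fun Qb hQb Qb' hQb' hne M => ?_⟩
  · exact tendsto_sIRatio_nhdsGT_zero hα0
      (lt_min (infDist_frontier_pos hDopen hDbdd hx) (infDist_frontier_pos hDopen hDbdd hy))
      Φ₀ Φ₁ Φ₂ φf l
  · exact frequently_le_liminf_sIRatio hα0 hβ₁ hφ hφscale hΦ₁def hΦ₂def hl hlscale hlliminf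
      hΦ₀def hQb hQb' hne M

/-- Lemma 3.5(ii): borderline case `β₂ = α + β₁` with
`Φ₁(r) = (1∧r)^{β₁}`, `Φ₂(r) = (1∧r)^{β₂} φ(r)` and `liminf_{s→0⁺} ℓ(s) > 0`. -/
theorem statement_9
    (d : ℕ) (hd : 2 ≤ d)
    (D : Set (EuclideanSpace ℝ (Fin d))) (hDopen : IsOpen D)
    (hDbdd : Bornology.IsBounded D)
    (α β₁ : ℝ) (hα0 : 0 < α) (hα2 : α < 2) (hβ₁ : 0 ≤ β₁)
    (φf : ℝ → ℝ) (hφ : StdFun φf) (hφscale : SlowlyVaryingScaling φf)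
    (Φ₁ Φ₂ l : ℝ → ℝ)
    (hΦ₁def : ∀ r : ℝ, Φ₁ r = min 1 r ^ β₁)
    (hΦ₂def : ∀ r : ℝ, Φ₂ r = min 1 r ^ (α + β₁) * φf r)
    (hl : StdFun l) (hlscale : EllScaling l β₁ (α + β₁))
    (hlliminf : ∃ c : ℝ, 0 < c ∧ ∀ᶠ s in 𝓝[>] (0 : ℝ), c ≤ l s)
    (Φ₀ : ℝ → ℝ) (hΦ₀def : ∀ r : ℝ, Φ₀ r = Φ₁ r * l r) :
    (∀ x ∈ D, ∀ y ∈ D, x ≠ y →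
      Tendsto (fun t : ℝ =>
          t * dist x y ^ (-α) * sI α D Φ₀ φf l t x y / Afun α D Φ₁ Φ₂ l t x y)
        (𝓝[>] (0 : ℝ)) (𝓝 0)) ∧
    (∀ Qb ∈ frontier D, ∀ Qb' ∈ frontier D, Qb ≠ Qb' →
      ∀ M : ℝ, ∃ᶠ t in 𝓝[>] (0 : ℝ),
        M ≤ Filter.liminf
            (fun p : EuclideanSpace ℝ (Fin d) × EuclideanSpace ℝ (Fin d) =>
              t * dist p.1 p.2 ^ (-α) * sI α D Φ₀ φf l t p.1 p.2 /
                Afun α D Φ₁ Φ₂ l t p.1 p.2)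
            ((𝓝[D] Qb) ×ˢ (𝓝[D] Qb'))) :=
  statement_9_general d hd D hDopen hDbdd α β₁ hα0 hβ₁ φf hφ hφscale Φ₁ Φ₂ l hΦ₁def hΦ₂def hl
    hlscale hlliminf Φ₀ hΦ₀def
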